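/- The rotation relation on trees is symmetric: if t₁ ∼_r t₂ via a bijection r, then t₂ ∼_{r⁻¹} t₁. Consequently, the rotation relation ∼ is an equivalence relation on trees. -/

import Mathlib

/-!
Record the edges of a tree as the unordered pairs `{p.dropLast, p}`, one for each non-root
position `p`. A rotation `t ∼_r u` is exactly a bijection `r` of the domains that maps edges to
edges. Since `r` is injective, so is the induced map on edges, and a tree with `n` nodes has
`n - 1` edges; by counting, `r` maps the edges of `t` onto those of `u`, so its inverse maps
edges to edges as well. Reflexivity and transitivity are immediate from the edge description.
-/

open scoped Classical

/-- Positions in a tree: finite sequences of natural numbers. -/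
abbrev Pos := List ℕ

/-- A tree over an alphabet `A`: a finite partial function from positions to `A`
whose domain is prefix-closed and closed under taking smaller sibling indices. -/
structure PTree (A : Type) where
  f : Pos → Option A
  fin : {p : Pos | f p ≠ none}.Finite
  prefixClosed : ∀ (p : Pos) (i : ℕ), f (p ++ [i]) ≠ none → f p ≠ none
  childClosed : ∀ (p : Pos) (i j : ℕ), j < i → f (p ++ [i]) ≠ none → f (p ++ [j]) ≠ none

namespace PTree

/-- Domain of a tree. -/
def dom {A : Type} (t : PTree A) : Set Pos := {p | t.f p ≠ none}

/-- The maximal direction `N` such that some position `p.N` is in the domain. -/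
noncomputable def maxDir {A : Type} (t : PTree A) : ℕ :=
  sSup {i | ∃ p, p ++ [i] ∈ t.dom}

/-- The direction alphabet `D(t) = {-1, 0, …, N}`. -/
noncomputable def dirs {A : Type} (t : PTree A) : Set ℤ :=
  {e | e = -1 ∨ (0 ≤ e ∧ e ≤ (t.maxDir : ℤ))}

/-- Moving from position `p` in direction `e`: `-1` is the parent direction
(`(p.i).(-1) = p`), a non-negative direction `e` leads to the child `p.e`. -/
def step (p : Pos) (e : ℤ) : Pos :=
  if e = -1 then p.dropLast else p ++ [e.toNat]

/-- `t ∼_r u`: `u` is a rotation of `t` via the bijection `r`. -/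
noncomputable def IsRotation {A B : Type} (t : PTree A) (u : PTree B) (r : Pos → Pos) : Prop :=
  Set.BijOn r t.dom u.dom ∧
  ∀ p ∈ t.dom, ∀ d : ℕ, (p ++ [d]) ∈ t.dom →
    ∃ e ∈ u.dirs, r (p ++ [d]) = step (r p) e

/-- A simple path in a tree: pairwise distinct positions, each obtained from the
previous one by moving in a direction from `D(t) ∪ {-1}`. -/
noncomputable def IsPath {A : Type} (t : PTree A) (ps : List Pos) : Prop :=
  ps.Nodup ∧ (∀ q ∈ ps, q ∈ t.dom) ∧
  ps.Chain' (fun a b => ∃ e ∈ t.dirs, b = step a e)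

end PTree

theorem Set.InjOn.sym2_map {α β : Type*} {f : α → β} {s : Set α} (hf : Set.InjOn f s) :
    Set.InjOn (Sym2.map f) {z | ∀ x ∈ z, x ∈ s} := by
  intro z hz w hw hzw
  induction z using Sym2.ind with | _ a b => ?_
  induction w using Sym2.ind with | _ c d => ?_
  simp only [Set.mem_ofPred_eq, Sym2.mem_iff, forall_eq_or_imp, forall_eq] at hz hw
  rw [Sym2.map_mk, Sym2.map_mk, Sym2.eq_iff] at hzw
  rw [Sym2.eq_iff]
  rcases hzw with ⟨hac, hbd⟩ | ⟨had, hbc⟩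
  · exact Or.inl ⟨hf hz.1 hw.1 hac, hf hz.2 hw.2 hbd⟩
  · exact Or.inr ⟨hf hz.1 hw.2 had, hf hz.2 hw.1 hbc⟩

lemma List.dropLast_ne_self {α : Type*} {l : List α} (h : l ≠ []) : l.dropLast ≠ l := by
  intro hl
  have := congrArg List.length hl
  simp only [List.length_dropLast] at this
  exact h (List.length_eq_zero_iff.1 (by omega))

namespace PTree

variable {A B C : Type}

lemma step_neg_one (p : Pos) : step p (-1) = p.dropLast := if_pos rfl

lemma step_natCast (p : Pos) (d : ℕ) : step p d = p ++ [d] := by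
  simp [step, show (d : ℤ) ≠ -1 by omega]

lemma mem_dirs_of_append_mem (t : PTree A) {p : Pos} {d : ℕ} (h : p ++ [d] ∈ t.dom) :
    (d : ℤ) ∈ t.dirs := by
  have hbdd : BddAbove {i | ∃ p, p ++ [i] ∈ t.dom} := by
    refine ((t.fin.image fun q => q.getLastD 0).subset ?_).bddAbove
    rintro i ⟨p, hp⟩
    exact ⟨p ++ [i], hp, by simp⟩
  exact Or.inr ⟨by positivity, by exact_mod_cast le_csSup hbdd ⟨p, h⟩⟩

lemma dropLast_mem (t : PTree A) {p : Pos} (h : p ∈ t.dom) : p.dropLast ∈ t.dom := by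
  induction p using List.reverseRecOn with
  | nil => exact h
  | append_singleton l a _ => rw [List.dropLast_concat]; exact t.prefixClosed l a h

lemma nil_mem (t : PTree A) {p : Pos} (h : p ∈ t.dom) : [] ∈ t.dom := by
  induction p using List.reverseRecOn with
  | nil => exact h
  | append_singleton l a ih => exact ih (t.prefixClosed l a h)

def edges (t : PTree A) : Set (Sym2 Pos) :=
  (fun p : Pos => s(p.dropLast, p)) '' (t.dom \ {[]})

lemma injOn_mk_dropLast : Set.InjOn (fun p : Pos => s(p.dropLast, p)) {p | p ≠ []} := by
  intro p hp q hq hpq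
  rcases Sym2.eq_iff.1 hpq with ⟨-, h⟩ | ⟨hpq, hqp⟩
  · exact h
  · have hp' := List.length_dropLast (xs := p)
    have hq' := List.length_dropLast (xs := q)
    rw [hpq] at hp'
    rw [← hqp] at hq'
    have : p.length ≠ 0 := by simpa using hp
    omega

lemma mem_dom_of_mem_edges {t : PTree A} {z : Sym2 Pos} (hz : z ∈ t.edges) :
    ∀ x ∈ z, x ∈ t.dom := by
  obtain ⟨p, ⟨hp, -⟩, rfl⟩ := hz
  simpa using ⟨t.dropLast_mem hp, hp⟩

lemma edges_finite (t : PTree A) : t.edges.Finite :=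
  (t.fin.subset Set.sdiff_subset).image _

lemma ncard_edges (t : PTree A) : t.edges.ncard = t.dom.ncard - 1 := by
  rw [edges, (injOn_mk_dropLast.mono fun p hp => hp.2).ncard_image]
  by_cases hnil : [] ∈ t.dom
  · exact Set.ncard_sdiff_singleton_of_mem hnil
  · have : t.dom = ∅ := Set.eq_empty_of_forall_notMem fun p hp => hnil (t.nil_mem hp)
    simp [this]

lemma mk_mem_edges_of_step (t : PTree A) {a b : Pos} (ha : a ∈ t.dom) (hb : b ∈ t.dom)
    (hab : a ≠ b) {e : ℤ} (hstep : b = step a e) : s(a, b) ∈ t.edges := by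
  by_cases he : e = -1
  · rw [he, step_neg_one] at hstep
    subst hstep
    have ha' : a ≠ [] := by rintro rfl; exact hab rfl
    exact ⟨a, ⟨ha, ha'⟩, Sym2.eq_swap⟩
  · rw [step, if_neg he] at hstep
    subst hstep
    exact ⟨a ++ [e.toNat], ⟨hb, by simp⟩, by simp⟩

lemma exists_dir_of_mk_mem_edges {t : PTree A} {a b : Pos} (hab : s(a, b) ∈ t.edges) :
    ∃ e ∈ t.dirs, b = step a e := by
  obtain ⟨p, ⟨hp, hpnil⟩, hpab⟩ := hab
  have hlast : p.dropLast ++ [p.getLast hpnil] = p := List.dropLast_append_getLast hpnil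
  rcases Sym2.eq_iff.1 hpab with ⟨rfl, rfl⟩ | ⟨rfl, rfl⟩
  · refine ⟨_, t.mem_dirs_of_append_mem (hlast.symm ▸ hp), ?_⟩
    rw [step_natCast, hlast]
  · exact ⟨-1, Or.inl rfl, (step_neg_one _).symm⟩

lemma isRotation_iff {t : PTree A} {u : PTree B} {r : Pos → Pos} :
    IsRotation t u r ↔ Set.BijOn r t.dom u.dom ∧ Set.MapsTo (Sym2.map r) t.edges u.edges := by
  refine ⟨fun ⟨hbij, hrot⟩ => ⟨hbij, ?_⟩, fun ⟨hbij, hmaps⟩ => ⟨hbij, ?_⟩⟩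
  · rintro _ ⟨q, ⟨hq, hqnil⟩, rfl⟩
    have hlast : q.dropLast ++ [q.getLast hqnil] = q := List.dropLast_append_getLast hqnil
    have hqd := t.dropLast_mem hq
    obtain ⟨e, -, hstep⟩ := hrot _ hqd _ (hlast ▸ hq)
    rw [hlast] at hstep
    have hne : r q.dropLast ≠ r q := fun h =>
      (List.dropLast_ne_self hqnil) (hbij.injOn hqd hq h)
    exact u.mk_mem_edges_of_step (hbij.mapsTo hqd) (hbij.mapsTo hq) hne hstep
  · intro p hp d hpd
    have hedge : s(p, p ++ [d]) ∈ t.edges := ⟨p ++ [d], ⟨hpd, by simp⟩, by simp⟩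
    exact exists_dir_of_mk_mem_edges (hmaps hedge)

lemma IsRotation.image_edges {t : PTree A} {u : PTree B} {r : Pos → Pos}
    (h : IsRotation t u r) : Sym2.map r '' t.edges = u.edges := by
  obtain ⟨hbij, hmaps⟩ := isRotation_iff.1 h
  have hinj : Set.InjOn (Sym2.map r) t.edges :=
    hbij.injOn.sym2_map.mono fun _ hz => mem_dom_of_mem_edges hz
  refine Set.eq_of_subset_of_ncard_le hmaps.image_subset ?_ u.edges_finite
  rw [hinj.ncard_image, ncard_edges, ncard_edges, hbij.ncard_eq]

lemma isRotation_id (t : PTree A) : IsRotation t t id :=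
  isRotation_iff.2 ⟨Set.bijOn_id _, fun z hz => by rwa [Sym2.map_id]⟩

lemma IsRotation.symm {t : PTree A} {u : PTree B} {r r' : Pos → Pos}
    (h : IsRotation t u r) (hinv : Set.InvOn r' r t.dom u.dom) : IsRotation u t r' := by
  refine isRotation_iff.2 ⟨h.1.symm hinv.symm, ?_⟩
  rintro _ hz'
  obtain ⟨z, hz, rfl⟩ := h.image_edges.symm ▸ hz'
  have hleft : ∀ x ∈ z, (r' ∘ r) x = id x := fun x hx => hinv.1 (mem_dom_of_mem_edges hz x hx)
  rwa [Sym2.map_map, Sym2.map_congr hleft, Sym2.map_id]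

lemma IsRotation.trans {t : PTree A} {u : PTree B} {w : PTree C} {r s : Pos → Pos}
    (hr : IsRotation t u r) (hs : IsRotation u w s) : IsRotation t w (s ∘ r) := by
  obtain ⟨hrb, hrm⟩ := isRotation_iff.1 hr
  obtain ⟨hsb, hsm⟩ := isRotation_iff.1 hs
  exact isRotation_iff.2 ⟨hsb.comp hrb, fun z hz => Sym2.map_map z ▸ hsm (hrm hz)⟩

end PTree

/-- The rotation relation is symmetric (if `t₁ ∼_r t₂` then
`t₂ ∼_{r⁻¹} t₁`), and consequently `∼` is an equivalence relation. -/
theorem rotation_symm_equivalence (A : Type) :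
    (∀ (t₁ t₂ : PTree A) (r r' : Pos → Pos),
        PTree.IsRotation t₁ t₂ r → Set.InvOn r' r t₁.dom t₂.dom →
        PTree.IsRotation t₂ t₁ r') ∧
    Equivalence (fun t₁ t₂ : PTree A => ∃ r, PTree.IsRotation t₁ t₂ r) :=
  ⟨fun _ _ _ _ h hinv => h.symm hinv,
    ⟨fun t => ⟨id, t.isRotation_id⟩,
      fun ⟨_, hr⟩ => ⟨_, hr.symm hr.1.invOn_invFunOn⟩,
      fun ⟨_, hr⟩ ⟨_, hs⟩ => ⟨_, hr.trans hs⟩⟩⟩
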